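/- Let G be the cycle graph on n ≥ 3 vertices. Then the characteristic polynomial of B equals (X^n − 1)²; consequently the eigenvalues of B are exactly the n-th roots of unity, each with algebraic multiplicity 2. Moreover, for every λ ∈ ℂ with λ^n = 1 the eigenspace ker(B − λI) has dimension 2, and B is diagonalizable over ℂ. -/

import Mathlib

/-!
In a 2-regular graph the non-backtracking matrix `B` is the permutation matrix of the map `σ`
sending a dart `u → v` to `w → u`, where `w` is the other neighbour of `u`. This `σ` is the
product of two fixed-point-free involutions (reversing a dart, and swapping the two darts that
leave a vertex), so reversal conjugates `σ` to `σ⁻¹` and no dart lies on the `σ`-cycle of its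
reverse. In a connected graph the tails of the darts on one cycle are all `n` vertices, so the
`2n` darts split into exactly two cycles of length `n`. Hence `B` is conjugate to two copies of
the cyclic shift of `Fin n`, which the Vandermonde matrix of a primitive `n`-th root of unity `ω`
diagonalises with eigenvalues `ω ^ k`.
-/

open Matrix Polynomial BigOperators

variable {V : Type*}

/-- The non-backtracking matrix of a graph `G`, indexed by darts (oriented edges):
`B[(k→l),(i→j)] = 1` if `j = k` and `i ≠ l`, else `0`. -/
def nbMatrix [DecidableEq V] (G : SimpleGraph V) : Matrix G.Dart G.Dart ℂ :=
  fun e f => if f.snd = e.fst ∧ f.fst ≠ e.snd then 1 else 0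

namespace Equiv.Perm

variable {α : Type*}

theorem not_sameCycle_mul_of_involutive {ρ τ : Perm α} (hρ : Function.Involutive ρ)
    (hτ : Function.Involutive τ) (hρx : ∀ x, ρ x ≠ x) (hτx : ∀ x, τ x ≠ x) (x : α) :
    ¬ (ρ * τ).SameCycle x (ρ x) := by
  set σ := ρ * τ
  have hρρ : ρ * ρ = 1 := Equiv.ext hρ
  have hρinv : ρ⁻¹ = ρ := inv_eq_of_mul_eq_one_right hρρ
  have hτinv : τ⁻¹ = τ := inv_eq_of_mul_eq_one_right (Equiv.ext hτ)
  have hreverse (j : ℤ) (y : α) : ρ ((σ ^ j) y) = (σ ^ (-j)) (ρ y) := by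
    have hconj : ρ * σ * ρ⁻¹ = σ⁻¹ := by
      rw [hρinv, _root_.mul_inv_rev, hρinv, hτinv, ← mul_assoc, hρρ, one_mul]
    rw [_root_.zpow_neg, ← _root_.inv_zpow, ← hconj, conj_zpow]
    simp [Perm.mul_apply, hρinv, hρ y]
  -- If `σ ^ k` maps `x` to `ρ x`, then `ρ` reverses the path `x, σ x, …, σ ^ k x`, so its
  -- midpoint is fixed by `ρ` (`k` even) or by `τ` (`k` odd).
  rintro ⟨k, hk⟩
  obtain ⟨j, rfl | rfl⟩ := Int.even_or_odd' k
  · apply hρx ((σ ^ j) x)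
    rw [hreverse, ← hk, ← Perm.mul_apply, ← _root_.zpow_add]
    ring_nf
  · apply hτx ((σ ^ j) x)
    apply ρ.injective
    rw [hreverse, ← hk, ← Perm.mul_apply (σ ^ (-j)), ← _root_.zpow_add,
      show -j + (2 * j + 1) = 1 + j by ring, _root_.zpow_add, zpow_one]
    rfl

section Orbits

open Function

theorem SameCycle.exists_pow_eq_of_lt_minimalPeriod [Finite α] {σ : Perm α} {x y : α}
    (h : σ.SameCycle x y) : ∃ k < minimalPeriod σ x, (σ ^ k) x = y := by
  obtain ⟨k, rfl⟩ := h.exists_nat_pow_eq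
  exact ⟨k % minimalPeriod σ x,
    Nat.mod_lt _ (minimalPeriod_pos_of_mem_periodicPts (σ.injective.mem_periodicPts x)),
    iterate_mod_minimalPeriod_eq⟩

variable (σ : Perm α) {R : Type*} {s : R → α}

theorem eq_of_pow_apply_eq_pow_apply (hs : Pairwise fun r r' ↦ ¬ σ.SameCycle (s r) (s r'))
    {r r' : R} {i j : ℕ} (hi : i < minimalPeriod σ (s r)) (hj : j < minimalPeriod σ (s r'))
    (h : (σ ^ i) (s r) = (σ ^ j) (s r')) : r = r' ∧ i = j := by
  obtain rfl : r = r' := by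
    by_contra hne
    exact hs hne (sameCycle_pow_left.1 (sameCycle_pow_right.1 (by rw [h])))
  exact ⟨rfl, (iterate_eq_iterate_iff_of_lt_minimalPeriod hi hj).1 h⟩

theorem sum_minimalPeriod_le_card [Fintype α] [Fintype R]
    (hs : Pairwise fun r r' ↦ ¬ σ.SameCycle (s r) (s r')) :
    ∑ r, minimalPeriod σ (s r) ≤ Fintype.card α := by
  have hinj :
      Injective fun x : Σ r, Fin (minimalPeriod σ (s r)) ↦ (σ ^ (x.2 : ℕ)) (s x.1) := by
    rintro ⟨r, i⟩ ⟨r', j⟩ h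
    obtain ⟨rfl, hij⟩ := eq_of_pow_apply_eq_pow_apply σ hs i.isLt j.isLt h
    rw [Fin.ext hij]
  simpa using Fintype.card_le_of_injective _ hinj

theorem exists_equiv_fin_prod_of_minimalPeriod_eq [Fintype α] [Fintype R] {n : ℕ} [NeZero n]
    (hn : ∀ r, minimalPeriod σ (s r) = n)
    (hs : Pairwise fun r r' ↦ ¬ σ.SameCycle (s r) (s r'))
    (hcard : Fintype.card α = n * Fintype.card R) :
    ∃ ψ : Fin n × R ≃ α, ∀ k r, σ (ψ (k, r)) = ψ (k + 1, r) := by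
  let f (x : Fin n × R) : α := (σ ^ (x.1 : ℕ)) (s x.2)
  have hinj : Injective f := by
    rintro ⟨i, r⟩ ⟨j, r'⟩ h
    obtain ⟨rfl, hij⟩ := eq_of_pow_apply_eq_pow_apply σ hs ((hn r).symm ▸ i.isLt)
      ((hn r').symm ▸ j.isLt) h
    exact Prod.ext (Fin.ext hij) rfl
  have hbij : Bijective f :=
    (Fintype.bijective_iff_injective_and_card f).2 ⟨hinj, by simp [hcard]⟩
  refine ⟨.ofBijective f hbij, fun k r ↦ ?_⟩
  have hmod := iterate_mod_minimalPeriod_eq (f := σ) (x := s r) (n := k + 1)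
  rw [hn r, iterate_eq_pow, iterate_eq_pow] at hmod
  simp only [Equiv.ofBijective_apply, f, Fin.val_add, Fin.val_one', Nat.add_mod_mod, hmod]
  rw [pow_succ', Perm.mul_apply]

end Orbits

end Equiv.Perm

namespace Matrix

variable {ι K : Type*} [Fintype ι] [DecidableEq ι]

theorem charpoly_mul_diagonal_mul_inv [CommRing K] {U : Matrix ι ι K} (hU : IsUnit U)
    (d : ι → K) : (U * diagonal d * U⁻¹).charpoly = ∏ i, (X - C (d i)) := by
  rw [charpoly_mul_comm, ← mul_assoc, nonsing_inv_mul _ ((isUnit_iff_isUnit_det U).1 hU), one_mul,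
    charpoly_diagonal]

theorem finrank_ker_mul_diagonal_mul_inv_sub_smul [Field K] [DecidableEq K] {U : Matrix ι ι K}
    (hU : IsUnit U) (d : ι → K) (μ : K) :
    Module.finrank K (LinearMap.ker (U * diagonal d * U⁻¹ - μ • 1).mulVecLin) =
      Fintype.card {i // d i = μ} := by
  have hdet := (isUnit_iff_isUnit_det U).1 hU
  have hshift :
      U * diagonal d * U⁻¹ - μ • 1 = U * diagonal (fun i ↦ d i - μ) * U⁻¹ := by
    rw [← diagonal_sub, ← smul_one_eq_diagonal, Matrix.mul_sub, Matrix.sub_mul, Matrix.mul_smul,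
      Matrix.smul_mul, Matrix.mul_one, mul_nonsing_inv _ hdet]
  have hrank : (U * diagonal d * U⁻¹ - μ • 1).rank = Fintype.card {i // d i - μ ≠ 0} := by
    rw [hshift, rank_mul_eq_left_of_isUnit_det _ _ (isUnit_nonsing_inv_det _ hdet),
      rank_mul_eq_right_of_isUnit_det _ _ hdet, rank_diagonal]
  have hnullity :=
    LinearMap.finrank_range_add_finrank_ker (U * diagonal d * U⁻¹ - μ • 1).mulVecLin
  rw [Module.finrank_fintype_fun_eq_card, ← rank, hrank] at hnullity
  simp_rw [sub_ne_zero, Fintype.card_subtype_compl] at hnullity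
  have := Fintype.card_subtype_le fun i ↦ d i = μ
  omega

theorem permMatrix_eq_mul_diagonal_mul_inv [Field K] {α R : Type*} [Fintype α] [DecidableEq α]
    [Fintype R] [DecidableEq R] {n : ℕ} [NeZero n] {σ : Equiv.Perm α} (ψ : Fin n × R ≃ α)
    (hψ : ∀ k r, σ (ψ (k, r)) = ψ (k + 1, r)) {ω : K} (hω : IsPrimitiveRoot ω n) :
    ∃ U : Matrix α α K, IsUnit U ∧
      σ.permMatrix K = U * diagonal (fun x ↦ ω ^ ((ψ.symm x).1 : ℕ)) * U⁻¹ := by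
  let F : Matrix (Fin n) (Fin n) K := vandermonde fun k ↦ ω ^ (k : ℕ)
  let U : Matrix α α K := (blockDiagonal fun _ : R ↦ F).submatrix ψ.symm ψ.symm
  have hdet : IsUnit U.det := by
    rw [det_submatrix_equiv_self, det_blockDiagonal, isUnit_iff_ne_zero, Finset.prod_ne_zero_iff]
    exact fun _ _ ↦
      det_vandermonde_ne_zero_iff.2 fun i j h ↦ Fin.ext (hω.pow_inj i.isLt j.isLt h)
  have hrot (k : Fin n) : ω ^ ((k + 1 : Fin n) : ℕ) = ω ^ (k : ℕ) * ω := by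
    have h := pow_mod_orderOf ω (k + 1)
    rw [← hω.eq_orderOf] at h
    rw [Fin.val_add, Fin.val_one', Nat.add_mod_mod, h, pow_succ]
  have hPU : σ.permMatrix K * U = U * diagonal fun x ↦ ω ^ ((ψ.symm x).1 : ℕ) := by
    ext x y
    obtain ⟨⟨k, r⟩, rfl⟩ := ψ.surjective x
    obtain ⟨⟨j, r'⟩, rfl⟩ := ψ.surjective y
    simp [U, F, PEquiv.toMatrix_toPEquiv_mul, mul_diagonal, hψ, blockDiagonal_apply, hrot, mul_pow]
  refine ⟨U, (isUnit_iff_isUnit_det U).2 hdet, ?_⟩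
  rw [← hPU, mul_nonsing_inv_cancel_right _ _ hdet]

end Matrix

namespace IsPrimitiveRoot

variable {K : Type*} [Field K] {n : ℕ} [NeZero n] {ω : K}

theorem prod_X_sub_C_pow (hω : IsPrimitiveRoot ω n) :
    ∏ k : Fin n, (X - C (ω ^ (k : ℕ))) = X ^ n - 1 := by
  classical
  have himage :
      (Finset.univ.image fun k : Fin n ↦ ω ^ (k : ℕ)) = nthRootsFinset n (1 : K) := by
    ext z
    rw [Finset.mem_image, Polynomial.mem_nthRootsFinset (NeZero.pos n)]
    refine ⟨?_, fun hz ↦ ?_⟩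
    · rintro ⟨k, -, rfl⟩
      rw [← pow_mul, mul_comm, pow_mul, hω.pow_eq_one, one_pow]
    · obtain ⟨k, hk, rfl⟩ := hω.eq_pow_of_pow_eq_one hz
      exact ⟨⟨k, hk⟩, Finset.mem_univ _, rfl⟩
  rw [X_pow_sub_one_eq_prod (NeZero.pos n) hω, ← himage,
    Finset.prod_image fun i _ j _ h ↦ Fin.ext (hω.pow_inj i.isLt j.isLt h)]

variable {α R : Type*} [Fintype α] [Fintype R]

theorem prod_X_sub_C_pow_fst (hω : IsPrimitiveRoot ω n) (ψ : Fin n × R ≃ α) :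
    ∏ x, (X - C (ω ^ ((ψ.symm x).1 : ℕ))) = (X ^ n - 1) ^ Fintype.card R := by
  rw [Equiv.prod_comp ψ.symm fun y ↦ X - C (ω ^ (y.1 : ℕ)), Fintype.prod_prod_type_right]
  simp only [hω.prod_X_sub_C_pow, Finset.prod_const, Finset.card_univ]

theorem card_pow_fst_eq [DecidableEq K] (hω : IsPrimitiveRoot ω n) (ψ : Fin n × R ≃ α)
    {μ : K} (hμ : μ ^ n = 1) :
    Fintype.card {x // ω ^ ((ψ.symm x).1 : ℕ) = μ} = Fintype.card R := by
  obtain ⟨k₀, hk₀, rfl⟩ := hω.eq_pow_of_pow_eq_one hμ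
  have hiff (k : Fin n) : ω ^ (k : ℕ) = ω ^ k₀ ↔ k = ⟨k₀, hk₀⟩ :=
    ⟨fun h ↦ Fin.ext (hω.pow_inj k.isLt hk₀ h), by rintro rfl; rfl⟩
  rw [← Fintype.card_congr
    (ψ.subtypeEquiv (p := fun y ↦ ω ^ (y.1 : ℕ) = ω ^ k₀) (by simp))]
  have hfilter : (Finset.univ.filter fun y : Fin n × R ↦ y.1 = ⟨k₀, hk₀⟩) =
      {⟨k₀, hk₀⟩} ×ˢ Finset.univ := by
    ext ⟨k, r⟩; simp [eq_comm]
  simp [hiff, Fintype.card_subtype, hfilter]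

end IsPrimitiveRoot

namespace SimpleGraph

variable {G : SimpleGraph V}

theorem Reachable.mem_of_adj_mem {S : Set V} (hS : ∀ v w, G.Adj v w → v ∈ S → w ∈ S)
    {u v : V} (h : G.Reachable u v) (hu : u ∈ S) : v ∈ S := by
  obtain ⟨p⟩ := h
  induction p with
  | nil => exact hu
  | cons hadj _ ih => exact ih (hS _ _ hadj hu)

variable [Fintype V] [DecidableRel G.Adj]

theorem eq_or_eq_of_degree_eq_two {v a b c : V} (hv : G.degree v = 2) (ha : G.Adj v a)
    (hb : G.Adj v b) (hab : a ≠ b) (hc : G.Adj v c) : c = a ∨ c = b := by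
  classical
  have hN : G.neighborFinset v = {a, b} := by
    refine (Finset.eq_of_subset_of_card_le ?_ ?_).symm
    · simp [Finset.insert_subset_iff, ha, hb]
    · rw [Finset.card_pair hab, card_neighborFinset_eq_degree, hv]
  simpa [hN] using (G.mem_neighborFinset v c).2 hc

theorem exists_adj_ne_of_one_lt_degree {v : V} (hv : 1 < G.degree v) (u : V) :
    ∃ w, G.Adj v w ∧ w ≠ u := by
  rw [← card_neighborFinset_eq_degree] at hv
  obtain ⟨w, hw, hwu⟩ := Finset.exists_mem_ne hv u
  exact ⟨w, (G.mem_neighborFinset v w).1 hw, hwu⟩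

theorem card_dart_eq_two_mul (hreg : ∀ v, G.degree v = 2) :
    Fintype.card G.Dart = 2 * Fintype.card V := by
  simp [dart_card_eq_sum_degrees, hreg, mul_comm]

variable (hreg : ∀ v, G.degree v = 2)

noncomputable def otherDart (e : G.Dart) : G.Dart :=
  have h := exists_adj_ne_of_one_lt_degree (by rw [hreg]; norm_num) e.snd
  ⟨(e.fst, h.choose), h.choose_spec.1⟩

theorem otherDart_eq_iff {e f : G.Dart} :
    otherDart hreg e = f ↔ f.fst = e.fst ∧ f.snd ≠ e.snd := by
  have hspec :=
    (exists_adj_ne_of_one_lt_degree (v := e.fst) (by rw [hreg]; norm_num) e.snd).choose_spec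
  constructor
  · rintro rfl
    exact ⟨rfl, hspec.2⟩
  · rintro ⟨hfst, hsnd⟩
    refine Dart.ext _ _ (Prod.ext hfst.symm ?_)
    have hf : G.Adj e.fst f.snd := hfst ▸ f.adj
    exact ((eq_or_eq_of_degree_eq_two (hreg _) hspec.1 e.adj hspec.2 hf).resolve_right hsnd).symm

theorem otherDart_involutive : Function.Involutive (otherDart hreg) := fun _ ↦
  (otherDart_eq_iff hreg).2 ⟨rfl, ((otherDart_eq_iff hreg).1 rfl).2.symm⟩

theorem otherDart_ne (e : G.Dart) : otherDart hreg e ≠ e := fun h ↦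
  ((otherDart_eq_iff hreg).1 h).2 rfl

/-- The dart preceding `e` on a non-backtracking walk. -/
noncomputable def nbPred : Equiv.Perm G.Dart :=
  Dart.symm_involutive.toPerm _ * (otherDart_involutive hreg).toPerm _

theorem nbPred_apply (e : G.Dart) : nbPred hreg e = (otherDart hreg e).symm := rfl

theorem nbPred_eq_iff {e f : G.Dart} : nbPred hreg e = f ↔ f.snd = e.fst ∧ f.fst ≠ e.snd := by
  rw [nbPred_apply, Dart.symm_involutive.eq_iff, otherDart_eq_iff]
  rfl

theorem nbMatrix_eq_permMatrix [DecidableEq V] : nbMatrix G = (nbPred hreg).permMatrix ℂ := by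
  ext e f
  simp [nbMatrix, PEquiv.toMatrix_apply, nbPred_eq_iff]

theorem not_sameCycle_nbPred_symm (e : G.Dart) : ¬ (nbPred hreg).SameCycle e e.symm :=
  Equiv.Perm.not_sameCycle_mul_of_involutive Dart.symm_involutive (otherDart_involutive hreg)
    Dart.symm_ne (otherDart_ne hreg) e

theorem pairwise_not_sameCycle_nbPred (e : G.Dart) :
    Pairwise fun r r' : Fin 2 ↦
      ¬ (nbPred hreg).SameCycle (![e, e.symm] r) (![e, e.symm] r') := by
  intro r r' hrr'
  fin_cases r <;> fin_cases r'
  all_goals first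
    | exact absurd rfl hrr'
    | exact not_sameCycle_nbPred_symm hreg e
    | exact fun h ↦ not_sameCycle_nbPred_symm hreg e h.symm

open Function

theorem card_le_minimalPeriod_nbPred (hconn : G.Connected) (e : G.Dart) :
    Fintype.card V ≤ minimalPeriod (nbPred hreg) e := by
  classical
  set σ := nbPred hreg
  let S : Set V := {v | ∃ d, σ.SameCycle e d ∧ d.fst = v}
  -- the neighbours of `d.fst` are `d.snd = (σ⁻¹ d).fst` and `(σ d).fst`
  have hS : ∀ v w, G.Adj v w → v ∈ S → w ∈ S := by
    rintro _ w hw ⟨d, hd, rfl⟩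
    have hσd : G.Adj d.fst (σ d).fst := (otherDart hreg d).adj
    have hne : d.snd ≠ (σ d).fst := fun h ↦ ((otherDart_eq_iff hreg).1 rfl).2 h.symm
    rcases eq_or_eq_of_degree_eq_two (hreg _) d.adj hσd hne hw with rfl | rfl
    · exact ⟨σ.symm d, Equiv.Perm.sameCycle_symm_apply_right.2 hd,
        ((nbPred_eq_iff hreg).1 (σ.apply_symm_apply d)).1.symm⟩
    · exact ⟨σ d, hd.apply_right, rfl⟩
  have hsurj : ∀ v, ∃ k < minimalPeriod σ e, ((σ ^ k) e).fst = v := by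
    intro v
    obtain ⟨d, hd, rfl⟩ :=
      (hconn.preconnected e.fst v).mem_of_adj_mem hS ⟨e, .refl _ _, rfl⟩
    obtain ⟨k, hk, rfl⟩ := hd.exists_pow_eq_of_lt_minimalPeriod
    exact ⟨k, hk, rfl⟩
  calc Fintype.card V = (Finset.univ : Finset V).card := rfl
    _ ≤ ((Finset.range (minimalPeriod σ e)).image fun k ↦ ((σ ^ k) e).fst).card := by
        refine Finset.card_le_card fun v _ ↦ ?_
        obtain ⟨k, hk, rfl⟩ := hsurj v
        exact Finset.mem_image_of_mem _ (Finset.mem_range.2 hk)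
    _ ≤ minimalPeriod σ e := Finset.card_image_le.trans (Finset.card_range _).le

theorem minimalPeriod_nbPred (hconn : G.Connected) (e : G.Dart) :
    minimalPeriod (nbPred hreg) e = Fintype.card V := by
  have hsum := (nbPred hreg).sum_minimalPeriod_le_card (pairwise_not_sameCycle_nbPred hreg e)
  have hdarts := card_dart_eq_two_mul hreg
  have h1 := card_le_minimalPeriod_nbPred hreg hconn e
  have h2 := card_le_minimalPeriod_nbPred hreg hconn e.symm
  simp only [Fin.sum_univ_two, Matrix.cons_val_zero, Matrix.cons_val_one] at hsum
  omega

theorem exists_equiv_fin_prod_nbPred (hconn : G.Connected) {n : ℕ} [NeZero n]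
    (hcard : Fintype.card V = n) :
    ∃ ψ : Fin n × Fin 2 ≃ G.Dart, ∀ k r, nbPred hreg (ψ (k, r)) = ψ (k + 1, r) := by
  obtain ⟨v⟩ := hconn.nonempty
  obtain ⟨w, hvw⟩ := (G.degree_pos_iff_exists_adj v).1 (by rw [hreg]; norm_num)
  let e : G.Dart := ⟨(v, w), hvw⟩
  refine (nbPred hreg).exists_equiv_fin_prod_of_minimalPeriod_eq (fun r ↦ ?_)
    (pairwise_not_sameCycle_nbPred hreg e) ?_
  · rw [minimalPeriod_nbPred hreg hconn, hcard]
  · rw [card_dart_eq_two_mul hreg, hcard, Fintype.card_fin, mul_comm]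

end SimpleGraph

theorem nbMatrix_cycleGraph_charpoly_eigenspaces_diagonalizable
    [DecidableEq V] [Fintype V] (G : SimpleGraph V) [DecidableRel G.Adj]
    (n : ℕ) (hcard : Fintype.card V = n)
    (hconn : G.Connected) (hreg : ∀ v : V, G.degree v = 2) :
    (nbMatrix G).charpoly = (X ^ n - 1) ^ 2 ∧
    (∀ μ : ℂ, μ ^ n = 1 →
      Module.finrank ℂ ↥(LinearMap.ker (nbMatrix G - μ • 1).mulVecLin) = 2) ∧
    ∃ U D : Matrix G.Dart G.Dart ℂ, IsUnit U ∧ D.IsDiag ∧ nbMatrix G = U * D * U⁻¹ := by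
  have : Nonempty V := hconn.nonempty
  have : NeZero n := ⟨hcard ▸ Fintype.card_ne_zero⟩
  have hω := Complex.isPrimitiveRoot_exp n (NeZero.ne n)
  obtain ⟨ψ, hψ⟩ := SimpleGraph.exists_equiv_fin_prod_nbPred hreg hconn hcard
  obtain ⟨U, hU, hB⟩ := permMatrix_eq_mul_diagonal_mul_inv ψ hψ hω
  rw [SimpleGraph.nbMatrix_eq_permMatrix hreg, hB]
  refine ⟨?_, fun μ hμ ↦ ?_, U, _, hU, isDiag_diagonal _, rfl⟩
  · rw [charpoly_mul_diagonal_mul_inv hU, hω.prod_X_sub_C_pow_fst ψ, Fintype.card_fin]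
  · rw [finrank_ker_mul_diagonal_mul_inv_sub_smul hU, hω.card_pow_fst_eq ψ hμ, Fintype.card_fin]
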